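/- arXiv:1908.06550 — 6 statements merged into one kernel-verified Lean document; each statement's English description precedes it below -/
import Mathlib

section
/- Divergence-preserving branching bisimilarity is contained in weakly divergence-preserving branching bisimilarity: every divergence-preserving branching bisimulation is a weakly divergence-preserving branching bisimulation. -/
variable {P Act : Type*}

/-- ε-reachability: reflexive-transitive closure of τ-transitions. -/
def Eps (Tr : P → Act → P → Prop) (τ : Act) : P → P → Prop :=
  Relation.ReflTransGen (fun a b => Tr a τ b)

/-- B is a branching bisimulation. -/
def IsBranchingBisim (Tr : P → Act → P → Prop) (τ : Act) (B : P → P → Prop) : Prop :=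
  Symmetric B ∧ ∀ p q α p', B p q → Tr p α p' →
    (α = τ ∧ B p' q) ∨ ∃ q' q'', Eps Tr τ q q' ∧ Tr q' α q'' ∧ B p q' ∧ B p' q''

/-- p is stable: no outgoing τ-transition. -/
def Stable (Tr : P → Act → P → Prop) (τ : Act) (p : P) : Prop :=
  ∀ p', ¬ Tr p τ p'

/-- B is stability-respecting. -/
def StabRespecting (Tr : P → Act → P → Prop) (τ : Act) (B : P → P → Prop) : Prop :=
  ∀ p q, B p q → Stable Tr τ p →
    ∃ q', Eps Tr τ q q' ∧ Stable Tr τ q' ∧ B p q'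

/-- p is divergent: admits an infinite τ-sequence. -/
def Divergent (Tr : P → Act → P → Prop) (τ : Act) (p : P) : Prop :=
  ∃ f : ℕ → P, f 0 = p ∧ ∀ k, Tr (f k) τ (f (k + 1))

/-- Condition (D): B is divergence-preserving. -/
def DivPreserving (Tr : P → Act → P → Prop) (τ : Act) (B : P → P → Prop) : Prop :=
  ∀ p q (f : ℕ → P), B p q → f 0 = p → (∀ k, Tr (f k) τ (f (k + 1))) →
    (∀ k, B (f k) q) →
    ∃ g : ℕ → P, g 0 = q ∧ (∀ l, Tr (g l) τ (g (l + 1))) ∧ ∀ k l, B (f k) (g l)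

/-- B is weakly divergence-preserving. -/
def WeakDivPreserving (Tr : P → Act → P → Prop) (τ : Act) (B : P → P → Prop) : Prop :=
  ∀ p q, B p q → Divergent Tr τ p → Divergent Tr τ q

/-- B is a strong bisimulation. -/
def IsStrongBisim (Tr : P → Act → P → Prop) (B : P → P → Prop) : Prop :=
  Symmetric B ∧ ∀ p q α p', B p q → Tr p α p' → ∃ q', Tr q α q' ∧ B p' q'

/-- Generic coinduction-style lemma: a predicate closed under one τ-step
implies divergence. -/
lemma divergent_of_closed (Tr : P → Act → P → Prop) (τ : Act) (X : P → Prop)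
    (hX : ∀ x, X x → ∃ y, Tr x τ y ∧ X y) : ∀ q, X q → Divergent Tr τ q := by
  intro q hq
  classical
  let step : {x // X x} → {x // X x} := fun x =>
    ⟨(hX x.1 x.2).choose, (hX x.1 x.2).choose_spec.2⟩
  let F : ℕ → {x // X x} := fun n => step^[n] ⟨q, hq⟩
  refine ⟨fun n => (F n).1, rfl, fun k => ?_⟩
  have : F (k + 1) = step (F k) := Function.iterate_succ_apply' step k _
  show Tr (F k).1 τ (F (k+1)).1
  rw [this]
  exact (hX (F k).1 (F k).2).choose_spec.1

theorem divergent_shift (Tr : P → Act → P → Prop) (τ : Act) {q : P}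
    (h : Divergent Tr τ q) : ∃ q', Tr q τ q' ∧ Divergent Tr τ q' := by
  obtain ⟨f, hf0, hf⟩ := h
  exact ⟨f 1, hf0 ▸ hf 0, fun n => f (n + 1), rfl, fun k => hf (k + 1)⟩

/-- every divergence-preserving branching bisimulation is a
weakly divergence-preserving branching bisimulation. -/
theorem stmt2 (Tr : P → Act → P → Prop) (τ : Act) (B : P → P → Prop)
    (hbb : IsBranchingBisim Tr τ B) (hD : DivPreserving Tr τ B) :
    WeakDivPreserving Tr τ B := by
  classical
  set T : P → P → Prop := fun a b => Tr a τ b with hT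
  -- invariant: q is the target of B from the start of an infinite τ-sequence
  set inv : P → Prop := fun q => ∃ f : ℕ → P, (∀ k, Tr (f k) τ (f (k + 1))) ∧ B (f 0) q
    with hinv
  -- step lemma
  have step : ∀ q, inv q → Divergent Tr τ q ∨
      ∃ q'', Relation.TransGen T q q'' ∧ inv q'' := by
    intro q ⟨f, hf, hB0⟩
    by_cases hall : ∀ k, B (f k) q
    · left
      obtain ⟨g, hg0, hg, _⟩ := hD (f 0) q f hB0 rfl hf hall
      exact ⟨g, hg0, hg⟩
    · right
      push_neg at hall
      have hex : ∃ k, ¬ B (f k) q := hall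
      set k := Nat.find hex with hk
      have hknz : k ≠ 0 := by
        intro h0
        exact (Nat.find_spec hex) (by rw [← hk, h0]; exact hB0)
      obtain ⟨m, hm⟩ := Nat.exists_eq_succ_of_ne_zero hknz
      have hBm : B (f m) q := by
        by_contra hc
        have h1 : k ≤ m := hk ▸ Nat.find_le hc
        omega
      have hnB : ¬ B (f (m + 1)) q := by
        have := Nat.find_spec hex; rwa [← hk, hm] at this
      rcases hbb.2 (f m) q τ (f (m + 1)) hBm (hf m) with ⟨_, hB'⟩ | ⟨q', q'', heps, htr, _, hB''⟩
      · exact absurd hB' hnB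
      · have hinvq'' : inv q'' := by
          refine ⟨fun n => f ((m + 1) + n), fun n => ?_, ?_⟩
          · beta_reduce
            exact hf ((m + 1) + n)
          · beta_reduce
            rw [Nat.add_zero]
            exact hB''
        exact ⟨q'', Relation.TransGen.tail' heps htr, hinvq''⟩
  -- the closed set
  set S : P → Prop := fun q => Divergent Tr τ q ∨
    ∃ q'', Relation.TransGen T q q'' ∧ inv q'' with hS
  have hclosed : ∀ x, S x → ∃ y, Tr x τ y ∧ S y := by
    intro x hx
    rcases hx with hdiv | ⟨q'', htg, hinv''⟩
    · obtain ⟨y, hy, hdy⟩ := divergent_shift Tr τ hdiv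
      exact ⟨y, hy, Or.inl hdy⟩
    · obtain ⟨c, hxc, hc⟩ := (Relation.TransGen.head'_iff).mp htg
      rcases (Relation.reflTransGen_iff_eq_or_transGen).mp hc with heq | htg'
      · -- c = q'' (heq : q'' = c)
        subst heq
        rcases step _ hinv'' with hdiv' | ⟨q3, htg3, hinv3⟩
        · exact ⟨q'', hxc, Or.inl hdiv'⟩
        · exact ⟨q'', hxc, Or.inr ⟨q3, htg3, hinv3⟩⟩
      · exact ⟨c, hxc, Or.inr ⟨q'', htg', hinv''⟩⟩
  intro p q hBpq ⟨f, hf0, hf⟩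
  have hSq : S q := by
    rcases step q ⟨f, hf, hf0 ▸ hBpq⟩ with h | h
    · exact Or.inl h
    · exact Or.inr h
  exact divergent_of_closed Tr τ S hclosed q hSq
end

section
/- Every weakly divergence-preserving branching bisimulation is stability-respecting. Consequently weakly divergence-preserving branching bisimilarity is contained in stability-respecting branching bisimilarity. -/
variable {P Act : Type*}

/-- every weakly divergence-preserving branching bisimulation is
stability-respecting; consequently weakly divergence-preserving branching
bisimilarity is contained in stability-respecting branching bisimilarity. -/
theorem stmt3 (Tr : P → Act → P → Prop) (τ : Act) :
    (∀ B : P → P → Prop, IsBranchingBisim Tr τ B → WeakDivPreserving Tr τ B →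
      StabRespecting Tr τ B) ∧
    (∀ p q : P,
      (∃ B, IsBranchingBisim Tr τ B ∧ WeakDivPreserving Tr τ B ∧ B p q) →
      ∃ B, IsBranchingBisim Tr τ B ∧ StabRespecting Tr τ B ∧ B p q) := by
  have main : ∀ B : P → P → Prop, IsBranchingBisim Tr τ B → WeakDivPreserving Tr τ B →
      StabRespecting Tr τ B := by
    intro B hbb hwdp p q hpq hstab
    obtain ⟨hsym, hstep⟩ := hbb
    by_contra hno
    push_neg at hno
    have key : ∀ q', Eps Tr τ q q' → B p q' →
        ∃ q'', Tr q' τ q'' ∧ Eps Tr τ q q'' ∧ B p q'' := by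
      intro q' he hb
      have hns : ¬ Stable Tr τ q' := fun hs => hno q' he hs hb
      simp only [Stable, not_forall, not_not] at hns
      obtain ⟨q'', hTr⟩ := hns
      rcases hstep q' p τ q'' (hsym hb) hTr with ⟨_, hb'⟩ | ⟨p1, p2, hep, hTp, _, _⟩
      · exact ⟨q'', hTr, he.tail hTr, hsym hb'⟩
      · rcases hep.cases_head with rfl | ⟨c, hc, _⟩
        · exact absurd hTp (hstab p2)
        · exact absurd hc (hstab c)
    choose next hTr hEps hB using key
    set f : ℕ → {x : P // Eps Tr τ q x ∧ B p x} :=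
      fun n => Nat.rec ⟨q, Relation.ReflTransGen.refl, hpq⟩
        (fun _ x => ⟨next x.1 x.2.1 x.2.2, hEps x.1 x.2.1 x.2.2, hB x.1 x.2.1 x.2.2⟩) n
      with hf
    have hdiv : Divergent Tr τ q := by
      refine ⟨fun n => (f n).1, rfl, fun k => ?_⟩
      exact hTr (f k).1 (f k).2.1 (f k).2.2
    obtain ⟨g, hg0, hgstep⟩ := hwdp q p (hsym hpq) hdiv
    exact hstab (g 1) (hg0 ▸ hgstep 0)
  refine ⟨main, fun p q ⟨B, hbb, hwdp, hpq⟩ => ⟨B, hbb, main B hbb hwdp, hpq⟩⟩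
end

section
/- Branching bisimilarity satisfies the stuttering property: if p₀ →τ p₁ →τ ... →τ p_n is a sequence of τ-transitions with p₀ divergence-preserving branching bisimilar to p_n, then p₀ is divergence-preserving branching bisimilar to p_i for every 0 ≤ i ≤ n. -/
variable {P Act : Type*}

section StutterAux

/-- Points that are, up to `E`, on iterated "stuttering cycles" anchored at `f 0`. -/
inductive Good (Tr : P → Act → P → Prop) (τ : Act) (E : P → P → Prop) (f : ℕ → P) : P → Prop
  | base : Good Tr τ E f (f 0)
  | estep {u z : P} : Good Tr τ E f u → E u z → Good Tr τ E f z
  | mid {u v w : P} : Good Tr τ E f u → Eps Tr τ u v → Eps Tr τ v w → E u w →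
      Good Tr τ E f v

/-- τ-paths all of whose points are `Good`. -/
def GEps (Tr : P → Act → P → Prop) (τ : Act) (E : P → P → Prop) (f : ℕ → P) : P → P → Prop :=
  Relation.ReflTransGen (fun a b => Tr a τ b ∧ Good Tr τ E f a ∧ Good Tr τ E f b)

variable {Tr : P → Act → P → Prop} {τ : Act} {E : P → P → Prop} {f : ℕ → P} {n : ℕ}

lemma geps_eps {x y : P} (h : GEps Tr τ E f x y) : Eps Tr τ x y :=
  Relation.ReflTransGen.mono (r := fun a b => Tr a τ b ∧ Good Tr τ E f a ∧ Good Tr τ E f b)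
    (fun _ _ hh => hh.1) x y h

lemma geps_good {x y : P} (hx : Good Tr τ E f x) (h : GEps Tr τ E f x y) :
    Good Tr τ E f y := by
  induction h with
  | refl => exact hx
  | tail _ h2 _ => exact h2.2.2

/-- Any τ-path lying between `u` and a point `E`-equal to `u` consists of good points. -/
lemma geps_of_cycle {u w : P} (hu : Good Tr τ E f u) (huw : E u w) :
    ∀ {x y : P}, Eps Tr τ u x → Relation.ReflTransGen (fun a b => Tr a τ b) x y →
      Eps Tr τ y w → GEps Tr τ E f x y := by
  intro x y hux hxy
  induction hxy with
  | refl => intro _; exact Relation.ReflTransGen.refl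
  | @tail b c hxb hbc ih =>
    intro hcw
    have hbw : Eps Tr τ b w := Relation.ReflTransGen.head hbc hcw
    have hgb : Good Tr τ E f b :=
      Good.mid hu (Relation.ReflTransGen.trans hux hxb) hbw huw
    have hgc : Good Tr τ E f c :=
      Good.mid hu (Relation.ReflTransGen.tail (Relation.ReflTransGen.trans hux hxb) hbc) hcw huw
    exact Relation.ReflTransGen.tail (ih hbw) ⟨hbc, hgb, hgc⟩

/-- Transfer a good path across an `E`-pair, producing a good path. -/
lemma transfer (hEq : Equivalence E) (hbb : IsBranchingBisim Tr τ E)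
    {p c p' : P} (hpc : E p c) (hc : Good Tr τ E f c) (h : GEps Tr τ E f p p') :
    ∃ a, GEps Tr τ E f c a ∧ E p' a := by
  induction h with
  | refl => exact ⟨c, Relation.ReflTransGen.refl, hpc⟩
  | @tail b b' hpb hstep ih =>
    obtain ⟨a, hca, hba⟩ := ih
    obtain ⟨htr, hgb, hgb'⟩ := hstep
    rcases hbb.2 b a τ b' hba htr with ⟨_, h'⟩ | ⟨v, v', hav, htrv, hbv, hb'v'⟩
    · exact ⟨a, hca, h'⟩
    · have hga : Good Tr τ E f a := geps_good hc hca
      have hEav : E a v := hEq.trans (hEq.symm hba) hbv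
      have hgv : Good Tr τ E f v := Good.estep hga hEav
      have hgv' : Good Tr τ E f v' := Good.estep hgb' hb'v'
      have h1 : GEps Tr τ E f a v :=
        geps_of_cycle hga hEav Relation.ReflTransGen.refl hav Relation.ReflTransGen.refl
      exact ⟨v', Relation.ReflTransGen.tail (Relation.ReflTransGen.trans hca h1)
        ⟨htrv, hgv, hgv'⟩, hb'v'⟩

/-- Any good point can reach (by a good path) a point `E`-equal to `f 0`. -/
lemma reach_f0 (hEq : Equivalence E) (hbb : IsBranchingBisim Tr τ E)
    {c : P} (hc : Good Tr τ E f c) :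
    ∃ a, GEps Tr τ E f c a ∧ E (f 0) a := by
  induction hc with
  | base => exact ⟨f 0, Relation.ReflTransGen.refl, hEq.refl _⟩
  | @estep u z hu huz ih =>
    obtain ⟨a, hua, h0a⟩ := ih
    obtain ⟨a', hza', haa'⟩ := transfer hEq hbb huz (Good.estep hu huz) hua
    exact ⟨a', hza', hEq.trans h0a haa'⟩
  | @mid u v w hu huv hvw huw ih =>
    obtain ⟨a, hua, h0a⟩ := ih
    have hgw : Good Tr τ E f w := Good.estep hu huw
    have hvwG : GEps Tr τ E f v w :=
      geps_of_cycle hu huw huv hvw Relation.ReflTransGen.refl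
    obtain ⟨a', hwa', haa'⟩ := transfer hEq hbb huw hgw hua
    exact ⟨a', Relation.ReflTransGen.trans hvwG hwa', hEq.trans h0a haa'⟩

/-- Any good point can reach (by a good path) a point `E`-equal to any good point. -/
lemma reach (hEq : Equivalence E) (hbb : IsBranchingBisim Tr τ E)
    {z c : P} (hz : Good Tr τ E f z) (hc : Good Tr τ E f c) :
    ∃ a, GEps Tr τ E f c a ∧ E z a := by
  induction hz with
  | base => exact reach_f0 hEq hbb hc
  | @estep u z' hu huz ih =>
    obtain ⟨a, hca, hua⟩ := ih
    exact ⟨a, hca, hEq.trans (hEq.symm huz) hua⟩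
  | @mid u v w hu huv hvw huw ih =>
    obtain ⟨a, hca, hua⟩ := ih
    have hguv : GEps Tr τ E f u v :=
      geps_of_cycle hu huw Relation.ReflTransGen.refl huv hvw
    obtain ⟨a', haa', hva'⟩ := transfer hEq hbb hua (geps_good hc hca) hguv
    exact ⟨a', Relation.ReflTransGen.trans hca haa', hva'⟩

lemma epsF (hstepf : ∀ i < n, Tr (f i) τ (f (i + 1))) {i j : ℕ} (hij : i ≤ j)
    (hjn : j ≤ n) : Eps Tr τ (f i) (f j) := by
  revert hjn
  induction j, hij using Nat.le_induction with
  | base => intro _; exact Relation.ReflTransGen.refl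
  | succ j hij ih =>
    intro h
    exact Relation.ReflTransGen.tail (ih (by omega)) (hstepf j (by omega))

lemma good_f (hstepf : ∀ i < n, Tr (f i) τ (f (i + 1))) (hfn : E (f 0) (f n))
    {i : ℕ} (hi : i ≤ n) : Good Tr τ E f (f i) :=
  Good.mid Good.base (epsF hstepf (Nat.zero_le i) hi) (epsF hstepf hi le_rfl) hfn

lemma bisimCheck (hEq : Equivalence E) (hbb : IsBranchingBisim Tr τ E) :
    IsBranchingBisim Tr τ (fun x y => E x y ∨ (Good Tr τ E f x ∧ Good Tr τ E f y)) := by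
  constructor
  · intro x y hxy
    rcases hxy with h | ⟨h1, h2⟩
    · exact Or.inl (hbb.1 h)
    · exact Or.inr ⟨h2, h1⟩
  · intro p q α p' hpq htr
    rcases hpq with hE | ⟨hp, hq⟩
    · rcases hbb.2 p q α p' hE htr with ⟨h1, h2⟩ | ⟨q', q'', h1, h2, h3, h4⟩
      · exact Or.inl ⟨h1, Or.inl h2⟩
      · exact Or.inr ⟨q', q'', h1, h2, Or.inl h3, Or.inl h4⟩
    · obtain ⟨a, hqa, hpa⟩ := reach hEq hbb hp hq
      rcases hbb.2 p a α p' hpa htr with ⟨h1, h2⟩ | ⟨q', q'', h1, h2, h3, h4⟩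
      · exact Or.inl ⟨h1, Or.inr ⟨Good.estep (geps_good hq hqa) (hEq.symm h2), hq⟩⟩
      · exact Or.inr ⟨q', q'',
          Relation.ReflTransGen.trans (geps_eps hqa) h1, h2, Or.inl h3, Or.inl h4⟩

lemma divCheck (hEq : Equivalence E) (hbb : IsBranchingBisim Tr τ E)
    (hD : DivPreserving Tr τ E) :
    DivPreserving Tr τ (fun x y => E x y ∨ (Good Tr τ E f x ∧ Good Tr τ E f y)) := by
  intro p q g hpq hg0 hgs hrel
  by_cases hallE : ∀ k, E (g k) q
  · obtain ⟨h, h0, hsteps, hcross⟩ := hD p q g (hg0 ▸ hallE 0) hg0 hgs hallE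
    exact ⟨h, h0, hsteps, fun k l => Or.inl (hcross k l)⟩
  · push_neg at hallE
    obtain ⟨k₀, hk₀⟩ := hallE
    have hq : Good Tr τ E f q := by
      rcases hrel k₀ with h | ⟨_, h⟩
      · exact absurd h hk₀
      · exact h
    have hgood : ∀ k, Good Tr τ E f (g k) := by
      intro k
      rcases hrel k with h | ⟨h, _⟩
      · exact Good.estep hq (hEq.symm h)
      · exact h
    have hstep2 : ∀ c, Good Tr τ E f c →
        (∃ v, GEps Tr τ E f c v ∧ ∃ k, E (g k) v) →
        ∃ c', Tr c τ c' ∧ Good Tr τ E f c' ∧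
          (∃ v, GEps Tr τ E f c' v ∧ ∃ k, E (g k) v) := by
      intro c hgc hinv
      obtain ⟨v, hcv, k, hkv⟩ := hinv
      rcases Relation.ReflTransGen.cases_head hcv with rfl | ⟨m, hm, hmv⟩
      · -- c itself is E-related to g k
        by_cases hall : ∀ k', k ≤ k' → E (g k') c
        · obtain ⟨h, h0, hsteps, hcross⟩ :=
            hD (g k) c (fun a => g (k + a)) hkv rfl (fun a => hgs (k + a))
              (fun a => hall (k + a) (Nat.le_add_right k a))
          refine ⟨h 1, ?_, Good.estep (hgood k) (hcross 0 1),
            ⟨h 1, Relation.ReflTransGen.refl, k, hcross 0 1⟩⟩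
          have := hsteps 0
          rwa [h0] at this
        · push_neg at hall
          obtain ⟨k', hkk', hk'⟩ := hall
          have hex : ∃ d, ¬ E (g (k + d)) c :=
            ⟨k' - k, by rwa [Nat.add_sub_cancel' hkk']⟩
          classical
          have hd₀ : ¬ E (g (k + Nat.find hex)) c := Nat.find_spec hex
          have hpos : Nat.find hex ≠ 0 := by
            intro h0
            apply hd₀
            rw [h0, Nat.add_zero]
            exact hkv
          have hprev : E (g (k + (Nat.find hex - 1))) c := by
            by_contra hne
            exact Nat.find_min hex (by omega) hne
          have hj1 : k + (Nat.find hex - 1) + 1 = k + Nat.find hex := by omega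
          rcases hbb.2 (g (k + (Nat.find hex - 1))) c τ (g (k + (Nat.find hex - 1) + 1))
              hprev (hgs _) with ⟨_, hE⟩ | ⟨v₁, v₁', hcv₁, htrv, hjv, hj1v⟩
          · rw [hj1] at hE
            exact absurd hE hd₀
          · have hEcv₁ : E c v₁ := hEq.trans (hEq.symm hprev) hjv
            rcases Relation.ReflTransGen.cases_head hcv₁ with rfl | ⟨m, hcm, hmv₁⟩
            · exact ⟨v₁', htrv, Good.estep (hgood _) hj1v,
                ⟨v₁', Relation.ReflTransGen.refl, _, hj1v⟩⟩
            · have hgm : Good Tr τ E f m :=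
                Good.mid hgc (Relation.ReflTransGen.single hcm) hmv₁ hEcv₁
              refine ⟨m, hcm, hgm, ⟨v₁, ?_, _, hjv⟩⟩
              exact geps_of_cycle hgc hEcv₁ (Relation.ReflTransGen.single hcm) hmv₁
                Relation.ReflTransGen.refl
      · obtain ⟨htr, _, hgm⟩ := hm
        exact ⟨m, htr, hgm, ⟨v, hmv, k, hkv⟩⟩
    have hInvq : ∃ v, GEps Tr τ E f q v ∧ ∃ k, E (g k) v := by
      obtain ⟨a, hqa, h0a⟩ := reach hEq hbb (hgood 0) hq
      exact ⟨a, hqa, 0, h0a⟩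
    have hchoose : ∀ c : {c : P // Good Tr τ E f c ∧
        ∃ v, GEps Tr τ E f c v ∧ ∃ k, E (g k) v},
        ∃ c' : {c : P // Good Tr τ E f c ∧ ∃ v, GEps Tr τ E f c v ∧ ∃ k, E (g k) v},
          Tr c.1 τ c'.1 := by
      rintro ⟨c, hgc, hic⟩
      obtain ⟨c', h1, h2, h3⟩ := hstep2 c hgc hic
      exact ⟨⟨c', h2, h3⟩, h1⟩
    choose nxt hnxt using hchoose
    refine ⟨fun l => (Nat.rec ⟨q, hq, hInvq⟩ (fun _ prev => nxt prev) l :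
        {c : P // Good Tr τ E f c ∧ ∃ v, GEps Tr τ E f c v ∧ ∃ k, E (g k) v}).1,
      rfl, fun l => hnxt _, fun k l => Or.inr ⟨hgood k, ?_⟩⟩
    exact (Nat.rec ⟨q, hq, hInvq⟩ (fun _ prev => nxt prev) l :
        {c : P // Good Tr τ E f c ∧ ∃ v, GEps Tr τ E f c v ∧ ∃ k, E (g k) v}).2.1

end StutterAux


/-- stuttering property of divergence-preserving branching
bisimilarity: if p₀ →τ p₁ →τ ⋯ →τ p_n and p₀ ≈Δ p_n, then p₀ ≈Δ p_i for all
0 ≤ i ≤ n. -/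
theorem stmt5 (Tr : P → Act → P → Prop) (τ : Act) (E : P → P → Prop)
    (hEquiv : Equivalence E)
    (hbb : IsBranchingBisim Tr τ E)
    (hD : DivPreserving Tr τ E)
    (heps : ∀ p q p', E p q → Eps Tr τ p p' → ∃ q', Eps Tr τ q q' ∧ E p' q')
    (hlargest : ∀ B : P → P → Prop, IsBranchingBisim Tr τ B →
      DivPreserving Tr τ B → ∀ p q, B p q → E p q)
    (f : ℕ → P) (n : ℕ)
    (hstep : ∀ i < n, Tr (f i) τ (f (i + 1)))
    (h : E (f 0) (f n)) :
    ∀ i ≤ n, E (f 0) (f i) := by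
  intro i hi
  exact hlargest _ (bisimCheck hEquiv hbb) (divCheck hEquiv hbb hD) (f 0) (f i)
    (Or.inr ⟨good_f hstep h (Nat.zero_le n), good_f hstep h hi⟩)
end

section
/- If an LTS H is obtained from an LTS G by adding, for each divergent state p of G, a single fresh transition p →Δ⊤ √ to a new deadlocked state √ (where Δ⊤ is an action not occurring in G), then any weakly divergence-preserving branching bisimulation on G, extended with the pair (√,√), is a weakly divergence-preserving branching bisimulation on H. Hence weakly divergence-preserving branching bisimilarity on G coincides, on states of G, with that on H. -/
variable {P Act : Type*}

/-- Transitions of the LTS H: those of G (states `some p`, actions `some a`),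
plus a fresh transition `some p →(Δ⊤=none) none` exactly for divergent p,
where `none : Option P` is the fresh deadlocked state √. -/
def TrH (Tr : P → Act → P → Prop) (τ : Act) :
    Option P → Option Act → Option P → Prop
  | some p, some a, some q => Tr p a q
  | some p, none, none => Divergent Tr τ p
  | _, _, _ => False

/-- A relation B on G, extended with the pair (√, √). -/
def liftRel (B : P → P → Prop) : Option P → Option P → Prop
  | some p, some q => B p q
  | none, none => True
  | _, _ => False

lemma epsH_of_eps {Tr : P → Act → P → Prop} {τ : Act} {q q' : P}
    (h : Eps Tr τ q q') : Eps (TrH Tr τ) (some τ) (some q) (some q') := by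
  induction h with
  | refl => exact Relation.ReflTransGen.refl
  | tail _ h ih => exact ih.tail h

lemma eps_of_epsH {Tr : P → Act → P → Prop} {τ : Act} {q : P} {x : Option P}
    (h : Eps (TrH Tr τ) (some τ) (some q) x) : ∃ q', x = some q' ∧ Eps Tr τ q q' := by
  induction h with
  | refl => exact ⟨q, rfl, Relation.ReflTransGen.refl⟩
  | @tail b c _ h ih =>
    obtain ⟨b', hb', hbe⟩ := ih
    subst hb'
    cases c with
    | none => exact h.elim
    | some c => exact ⟨c, rfl, hbe.tail h⟩

lemma divH_of_div {Tr : P → Act → P → Prop} {τ : Act} {p : P} (h : Divergent Tr τ p) :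
    Divergent (TrH Tr τ) (some τ) (some p) := by
  obtain ⟨f, hf0, hf⟩ := h
  exact ⟨fun k => some (f k), by simp [hf0], fun k => hf k⟩

lemma div_of_divH {Tr : P → Act → P → Prop} {τ : Act} {p : P}
    (h : Divergent (TrH Tr τ) (some τ) (some p)) : Divergent Tr τ p := by
  obtain ⟨f, hf0, hf⟩ := h
  have hsome : ∀ k, ∃ x, f k = some x := by
    intro k
    induction k with
    | zero => exact ⟨p, hf0⟩
    | succ n ih =>
      obtain ⟨x, hx⟩ := ih
      have h1 := hf n
      rw [hx] at h1
      cases h' : f (n + 1) with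
      | none => rw [h'] at h1; exact h1.elim
      | some y => exact ⟨y, rfl⟩
  choose g hg using hsome
  refine ⟨g, ?_, fun k => ?_⟩
  · have := hg 0; rw [hf0] at this; exact (Option.some_injective _ this).symm
  · have h1 := hf k; rw [hg k, hg (k + 1)] at h1; exact h1

/-- adding divergence-oracle transitions preserves weakly
divergence-preserving branching bisimulations, and weakly
divergence-preserving branching bisimilarity on G coincides, on states of G,
with that on H. -/
theorem stmt10 (Tr : P → Act → P → Prop) (τ : Act) :
    (∀ B : P → P → Prop,
      IsBranchingBisim Tr τ B → WeakDivPreserving Tr τ B →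
        IsBranchingBisim (TrH Tr τ) (some τ) (liftRel B) ∧
        WeakDivPreserving (TrH Tr τ) (some τ) (liftRel B)) ∧
    (∀ p q : P,
      (∃ B, IsBranchingBisim Tr τ B ∧ WeakDivPreserving Tr τ B ∧ B p q) ↔
      (∃ B', IsBranchingBisim (TrH Tr τ) (some τ) B' ∧
        WeakDivPreserving (TrH Tr τ) (some τ) B' ∧ B' (some p) (some q))) := by
  have main : ∀ B : P → P → Prop, IsBranchingBisim Tr τ B → WeakDivPreserving Tr τ B →
      IsBranchingBisim (TrH Tr τ) (some τ) (liftRel B) ∧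
      WeakDivPreserving (TrH Tr τ) (some τ) (liftRel B) := by
    rintro B ⟨hsym, hB⟩ hW
    refine ⟨⟨?_, ?_⟩, ?_⟩
    · intro x y hxy
      cases x with
      | none => cases y with
        | none => trivial
        | some q => exact hxy.elim
      | some p => cases y with
        | none => exact hxy.elim
        | some q => exact hsym hxy
    · intro x y α x' hxy hstep
      cases x with
      | none => cases α <;> cases x' <;> exact hstep.elim
      | some p =>
        cases y with
        | none => exact hxy.elim
        | some q =>
          cases α with
          | none =>
            cases x' with
            | some p' => exact hstep.elim
            | none =>
              exact Or.inr ⟨some q, none, Relation.ReflTransGen.refl,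
                hW p q hxy hstep, hxy, trivial⟩
          | some a =>
            cases x' with
            | none => exact hstep.elim
            | some p' =>
              rcases hB p q a p' hxy hstep with ⟨ha, hb⟩ | ⟨q', q'', he, ht, h1, h2⟩
              · exact Or.inl ⟨by rw [ha], hb⟩
              · exact Or.inr ⟨some q', some q'', epsH_of_eps he, ht, h1, h2⟩
    · intro x y hxy hdiv
      cases x with
      | none =>
        obtain ⟨f, hf0, hf⟩ := hdiv
        have h1 := hf 0
        rw [hf0] at h1
        cases h' : f 1 <;> (rw [h'] at h1; exact h1.elim)
      | some p =>
        cases y with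
        | none => exact hxy.elim
        | some q => exact divH_of_div (hW p q hxy (div_of_divH hdiv))
  refine ⟨main, fun p q => ⟨?_, ?_⟩⟩
  · rintro ⟨B, h1, h2, h3⟩
    exact ⟨liftRel B, (main B h1 h2).1, (main B h1 h2).2, h3⟩
  · rintro ⟨B', hb1, hb2, h3⟩
    refine ⟨fun a b => B' (some a) (some b), ⟨fun a b h => hb1.1 h, ?_⟩, ?_, h3⟩
    · intro p' q' a p'' h hstep
      rcases hb1.2 (some p') (some q') (some a) (some p'') h hstep with
        ⟨ha, hb⟩ | ⟨y', y'', he, ht, hr1, hr2⟩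
      · exact Or.inl ⟨Option.some_injective _ ha, hb⟩
      · obtain ⟨q1, rfl, heps⟩ := eps_of_epsH he
        cases y'' with
        | none => exact ht.elim
        | some q2 => exact Or.inr ⟨q1, q2, heps, ht, hr1, hr2⟩
    · intro a b h hd
      exact div_of_divH (hb2 _ _ h (divH_of_div hd))
end

section
/- Renaming a subset of τ-transitions to a fresh visible action and back preserves weakly divergence-preserving branching bisimilarity in the following sense: let G be an LTS over actions A ∪ {τ, ι} with ι ∉ A, ι ≠ τ, and let dec(G) be the LTS with the same states where each ι-transition is relabelled τ and all other transitions are kept. If p and q are weakly divergence-preserving branching bisimilar in G, then p and q are weakly divergence-preserving branching bisimilar in dec(G). -/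
/-! Every branching bisimulation `B` of `G` is one of `dec(G)`: an `ι`-step is matched in `G`
by an `ι`-step after an `ε`-path, and both become `τ` in `dec(G)`. For divergence, follow a
`τ`-run of `dec(G)` from `p` with `B`-related states reachable from `q`. If the run eventually
consists of genuine `τ`-steps of `G`, its tail is divergent in `G`, and weak divergence
preservation in `G` yields divergence of the companion. Otherwise it contains infinitely many
`ι`-steps, each of which forces the companion to take at least one `τ`-step of `dec(G)`, and
these steps form an infinite `τ`-run from `q`. -/

open Relation

variable {P Act : Type*}

def decTr (Tr : P → Act → P → Prop) (τ ι : Act) (p : P) (α : Act) (q : P) : Prop :=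
  (α ≠ ι ∧ Tr p α q) ∨ (α = τ ∧ Tr p ι q)

section General

variable {D : P → Act → P → Prop} {τ : Act}

theorem eps_of_le {f : ℕ → P} (hf : ∀ k, D (f k) τ (f (k + 1))) {k l : ℕ} (hkl : k ≤ l) :
    Eps D τ (f k) (f l) := by
  induction l, hkl using Nat.le_induction with
  | base => exact ReflTransGen.refl
  | succ l _ ih => exact ih.tail (hf l)

theorem Divergent.head {a b : P} (hab : D a τ b) (hb : Divergent D τ b) : Divergent D τ a := by
  obtain ⟨g, rfl, hg⟩ := hb
  refine ⟨fun k => Nat.casesOn k a g, rfl, fun k => ?_⟩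
  cases k with
  | zero => exact hab
  | succ k => exact hg k

theorem Divergent.of_eps {a b : P} (hab : Eps D τ a b) (hb : Divergent D τ b) :
    Divergent D τ a := by
  induction hab using ReflTransGen.head_induction_on with
  | refl => exact hb
  | head hstep _ ih => exact ih.head hstep

theorem divergent_of_forall_exists_step {R : P → Prop} (h : ∀ x, R x → ∃ y, D x τ y ∧ R y)
    {q : P} (hq : R q) : Divergent D τ q := by
  choose next hstep hnext using h
  let g : ℕ → {x // R x} := fun n => Nat.rec ⟨q, hq⟩ (fun _ x => ⟨next x.1 x.2, hnext x.1 x.2⟩) n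
  exact ⟨fun n => (g n).1, rfl, fun k => hstep (g k).1 (g k).2⟩

theorem divergent_of_forall_exists_transGen {Q : P → Prop}
    (h : ∀ x, Q x → ∃ y, Q y ∧ TransGen (fun a b => D a τ b) x y) {q : P} (hq : Q q) :
    Divergent D τ q := by
  refine divergent_of_forall_exists_step
    (R := fun x => ∃ y, Q y ∧ ReflTransGen (fun a b => D a τ b) x y) ?_ ⟨q, hq, .refl⟩
  rintro x ⟨y, hy, hxy⟩
  rcases ReflTransGen.cases_head hxy with rfl | ⟨x', hstep, hrest⟩
  · obtain ⟨z, hz, hxz⟩ := h x hy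
    obtain ⟨x', hstep, hrest⟩ := TransGen.head'_iff.mp hxz
    exact ⟨x', hstep, z, hz, hrest⟩
  · exact ⟨x', hstep, y, hy, hrest⟩

variable {B : P → P → Prop}

theorem IsBranchingBisim.exists_eps_of_tau (hB : IsBranchingBisim D τ B) {a b r : P}
    (hab : D a τ b) (har : B a r) : ∃ r', Eps D τ r r' ∧ B b r' := by
  rcases hB.2 a r τ b har hab with ⟨-, hbr⟩ | ⟨r', r'', hrr', hstep, -, hbr''⟩
  · exact ⟨r, ReflTransGen.refl, hbr⟩
  · exact ⟨r'', ReflTransGen.tail hrr' hstep, hbr''⟩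

theorem IsBranchingBisim.exists_eps_of_eps (hB : IsBranchingBisim D τ B) {a b r : P}
    (hab : Eps D τ a b) (har : B a r) : ∃ r', Eps D τ r r' ∧ B b r' := by
  induction hab with
  | refl => exact ⟨r, ReflTransGen.refl, har⟩
  | tail _ hstep ih =>
    obtain ⟨r', hrr', hr'⟩ := ih
    obtain ⟨r'', hr'r'', hr''⟩ := hB.exists_eps_of_tau hstep hr'
    exact ⟨r'', ReflTransGen.trans hrr' hr'r'', hr''⟩

theorem isBranchingBisim_exists {C : (P → P → Prop) → Prop}
    (h : ∀ B, C B → IsBranchingBisim D τ B) :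
    IsBranchingBisim D τ (fun p q => ∃ B, C B ∧ B p q) := by
  refine ⟨fun p q ⟨B, hC, hpq⟩ => ⟨B, hC, (h B hC).1 hpq⟩, ?_⟩
  rintro p q α p' ⟨B, hC, hpq⟩ hstep
  rcases (h B hC).2 p q α p' hpq hstep with ⟨hα, hp'q⟩ | ⟨q', q'', hqq', hq'q'', hpq', hp'q''⟩
  · exact Or.inl ⟨hα, B, hC, hp'q⟩
  · exact Or.inr ⟨q', q'', hqq', hq'q'', ⟨B, hC, hpq'⟩, ⟨B, hC, hp'q''⟩⟩

theorem weakDivPreserving_exists {C : (P → P → Prop) → Prop}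
    (h : ∀ B, C B → WeakDivPreserving D τ B) :
    WeakDivPreserving D τ (fun p q => ∃ B, C B ∧ B p q) :=
  fun p q ⟨B, hC, hpq⟩ => h B hC p q hpq

end General

section Dec

variable {Tr : P → Act → P → Prop} {τ ι : Act} {B : P → P → Prop}

theorem decTr_of_ne {a b : P} {α : Act} (hα : α ≠ ι) (hab : Tr a α b) : decTr Tr τ ι a α b :=
  Or.inl ⟨hα, hab⟩

theorem decTr_tau_iff (hι : ι ≠ τ) {a b : P} :
    decTr Tr τ ι a τ b ↔ Tr a τ b ∨ Tr a ι b := by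
  simp [decTr, hι.symm]

theorem Eps.to_decTr (hι : ι ≠ τ) {a b : P} (hab : Eps Tr τ a b) : Eps (decTr Tr τ ι) τ a b :=
  ReflTransGen.lift id (fun _ _ => decTr_of_ne hι.symm) a b hab

theorem Divergent.to_decTr (hι : ι ≠ τ) {p : P} (hp : Divergent Tr τ p) :
    Divergent (decTr Tr τ ι) τ p :=
  let ⟨f, hf0, hf⟩ := hp
  ⟨f, hf0, fun k => decTr_of_ne hι.symm (hf k)⟩

theorem IsBranchingBisim.to_decTr (hι : ι ≠ τ) (hB : IsBranchingBisim Tr τ B) :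
    IsBranchingBisim (decTr Tr τ ι) τ B := by
  refine ⟨hB.1, ?_⟩
  rintro p q α p' hpq (⟨hα, hstep⟩ | ⟨rfl, hstep⟩)
  · rcases hB.2 p q α p' hpq hstep with hτ | ⟨q', q'', hqq', hq'q'', hpq', hp'q''⟩
    · exact Or.inl hτ
    · exact Or.inr ⟨q', q'', hqq'.to_decTr hι, decTr_of_ne hα hq'q'', hpq', hp'q''⟩
  · rcases hB.2 p q ι p' hpq hstep with ⟨hιτ, -⟩ | ⟨q', q'', hqq', hq'q'', hpq', hp'q''⟩
    · exact absurd hιτ hι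
    · exact Or.inr ⟨q', q'', hqq'.to_decTr hι, Or.inr ⟨rfl, hq'q''⟩, hpq', hp'q''⟩

theorem IsBranchingBisim.exists_transGen_decTr_of_iota (hι : ι ≠ τ)
    (hB : IsBranchingBisim Tr τ B) {a b r : P} (hab : Tr a ι b) (har : B a r) :
    ∃ r', TransGen (fun x y => decTr Tr τ ι x τ y) r r' ∧ B b r' := by
  rcases hB.2 a r ι b har hab with ⟨hιτ, -⟩ | ⟨r', r'', hrr', hr'r'', -, hbr''⟩
  · exact absurd hιτ hι
  · exact ⟨r'', TransGen.tail' (hrr'.to_decTr hι) (Or.inr ⟨rfl, hr'r''⟩), hbr''⟩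

theorem WeakDivPreserving.to_decTr (hι : ι ≠ τ) (hB : IsBranchingBisim Tr τ B)
    (hW : WeakDivPreserving Tr τ B) : WeakDivPreserving (decTr Tr τ ι) τ B := by
  rintro p q hpq ⟨f, rfl, hf⟩
  have follow : ∀ {k l r}, k ≤ l → B (f k) r → ∃ r', Eps (decTr Tr τ ι) τ r r' ∧ B (f l) r' :=
    fun hkl hkr => (hB.to_decTr hι).exists_eps_of_eps (eps_of_le hf hkl) hkr
  by_cases htail : ∃ K, ∀ k, Tr (f (K + k)) τ (f (K + k + 1))
  · obtain ⟨K, hK⟩ := htail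
    obtain ⟨r, hqr, hr⟩ := follow (Nat.zero_le K) hpq
    have hdiv : Divergent Tr τ (f K) := ⟨fun k => f (K + k), rfl, hK⟩
    exact ((hW _ _ hr hdiv).to_decTr hι).of_eps hqr
  · push Not at htail
    refine divergent_of_forall_exists_transGen (Q := fun r => ∃ k, B (f k) r) ?_ ⟨0, hpq⟩
    rintro r ⟨k, hkr⟩
    obtain ⟨m, hm⟩ := htail k
    have hiota : Tr (f (k + m)) ι (f (k + m + 1)) := ((decTr_tau_iff hι).1 (hf _)).resolve_left hm
    obtain ⟨r', hrr', hr'⟩ := follow (Nat.le_add_right k m) hkr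
    obtain ⟨r'', hr'r'', hr''⟩ := hB.exists_transGen_decTr_of_iota hι hiota hr'
    exact ⟨r'', ⟨_, hr''⟩, TransGen.trans_right hrr' hr'r''⟩

end Dec

/-- renaming ι-transitions to τ preserves weakly
divergence-preserving branching bisimilarity: the relation 'weakly
divergence-preserving branching bisimilar in G' is itself a weakly
divergence-preserving branching bisimulation on dec(G); hence related states
are weakly divergence-preserving branching bisimilar in dec(G). -/
theorem stmt11 (Tr : P → Act → P → Prop) (τ ι : Act) (hι : ι ≠ τ) :
    (IsBranchingBisim (decTr Tr τ ι) τ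
        (fun p q => ∃ B, IsBranchingBisim Tr τ B ∧ WeakDivPreserving Tr τ B ∧ B p q) ∧
      WeakDivPreserving (decTr Tr τ ι) τ
        (fun p q => ∃ B, IsBranchingBisim Tr τ B ∧ WeakDivPreserving Tr τ B ∧ B p q)) ∧
    (∀ p q : P,
      (∃ B, IsBranchingBisim Tr τ B ∧ WeakDivPreserving Tr τ B ∧ B p q) →
      ∃ B, IsBranchingBisim (decTr Tr τ ι) τ B ∧
        WeakDivPreserving (decTr Tr τ ι) τ B ∧ B p q) := by
  simp only [← and_assoc] -- regroup bisimilarity as `∃ B, C B ∧ B p q`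
  have bisim := isBranchingBisim_exists (D := decTr Tr τ ι) (τ := τ)
    (C := fun B => IsBranchingBisim Tr τ B ∧ WeakDivPreserving Tr τ B) fun _ hC => hC.1.to_decTr hι
  have div := weakDivPreserving_exists (D := decTr Tr τ ι) (τ := τ)
    (C := fun B => IsBranchingBisim Tr τ B ∧ WeakDivPreserving Tr τ B)
    fun _ hC => hC.2.to_decTr hι hC.1
  exact ⟨⟨bisim, div⟩, fun p q hpq => ⟨_, ⟨bisim, div⟩, hpq⟩⟩
end

section
/- For the sequencing operator, branching bisimilarity is not a congruence: in the LTS with processes p, q, r where p →τ p is the only transition of p, q has no transitions, and r →a r₀ (r₀ deadlocked), and with sequencing semantics x;y behaving like x while x has transitions and like y when x has none, we have p branching bisimilar to q, p;r strongly bisimilar to p, q;r strongly bisimilar to r, but p;r not branching bisimilar to q;r; moreover p is not stability-respecting branching bisimilar to q. -/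
variable {P Act : Type*}

/-- States: p (τ-loop), q (deadlocked), r →a r0, pr = p;r (τ-loop),
qr = q;r (→a r0). -/
inductive St16 : Type | p | q | r | r0 | pr | qr

inductive Ac16 : Type | tau | a

def Tr16 : St16 → Ac16 → St16 → Prop := fun s α t =>
  (s = .p ∧ α = .tau ∧ t = .p) ∨ (s = .r ∧ α = .a ∧ t = .r0) ∨
  (s = .pr ∧ α = .tau ∧ t = .pr) ∨ (s = .qr ∧ α = .a ∧ t = .r0)

lemma eps_qr : ∀ x, Eps Tr16 Ac16.tau St16.qr x → x = St16.qr := by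
  intro x h
  induction h with
  | refl => rfl
  | tail _ h2 ih => subst ih; rcases h2 with ⟨h,_⟩|⟨h,_⟩|⟨h,_⟩|⟨_,h,_⟩ <;> simp_all

lemma eps_pr : ∀ x, Eps Tr16 Ac16.tau St16.pr x → x = St16.pr := by
  intro x h
  induction h with
  | refl => rfl
  | tail _ h2 ih => subst ih; rcases h2 with ⟨h,_⟩|⟨h,_⟩|⟨_,_,h⟩|⟨h,_⟩ <;> simp_all

lemma eps_p : ∀ x, Eps Tr16 Ac16.tau St16.p x → x = St16.p := by
  intro x h
  induction h with
  | refl => rfl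
  | tail _ h2 ih => subst ih; rcases h2 with ⟨_,_,h⟩|⟨h,_⟩|⟨h,_⟩|⟨h,_⟩ <;> simp_all

lemma eps_q : ∀ x, Eps Tr16 Ac16.tau St16.q x → x = St16.q := by
  intro x h
  induction h with
  | refl => rfl
  | tail _ h2 ih => subst ih; rcases h2 with ⟨h,_⟩|⟨h,_⟩|⟨h,_⟩|⟨h,_⟩ <;> simp_all

/-- p ≈ᵦ q, p;r ↔ p, q;r ↔ r, but p;r not ≈ᵦ q;r, and p is not
stability-respecting branching bisimilar to q. -/
theorem stmt16 :
    (∃ B, IsBranchingBisim Tr16 Ac16.tau B ∧ B St16.p St16.q) ∧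
    (∃ B, IsStrongBisim Tr16 B ∧ B St16.pr St16.p) ∧
    (∃ B, IsStrongBisim Tr16 B ∧ B St16.qr St16.r) ∧
    ¬ (∃ B, IsBranchingBisim Tr16 Ac16.tau B ∧ B St16.pr St16.qr) ∧
    ¬ (∃ B, IsBranchingBisim Tr16 Ac16.tau B ∧ StabRespecting Tr16 Ac16.tau B ∧
        B St16.p St16.q) := by
  refine ⟨?_, ?_, ?_, ?_, ?_⟩
  · refine ⟨fun x y => (x = St16.p ∧ y = St16.q) ∨ (x = St16.q ∧ y = St16.p), ⟨?_, ?_⟩, Or.inl ⟨rfl, rfl⟩⟩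
    · intro x y h; tauto
    · rintro x y α x' (⟨rfl, rfl⟩|⟨rfl, rfl⟩) ht <;>
        rcases ht with ⟨h1,h2,h3⟩|⟨h1,_⟩|⟨h1,_⟩|⟨h1,_⟩ <;> simp_all
  · refine ⟨fun x y => (x = St16.pr ∧ y = St16.p) ∨ (x = St16.p ∧ y = St16.pr), ⟨?_, ?_⟩, Or.inl ⟨rfl, rfl⟩⟩
    · intro x y h; tauto
    · rintro x y α x' (⟨rfl, rfl⟩|⟨rfl, rfl⟩) ht <;>
        rcases ht with ⟨h1,h2,h3⟩|⟨h1,_⟩|⟨h1,h2,h3⟩|⟨h1,_⟩ <;> simp_all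
      · exact Or.inl ⟨rfl, rfl, rfl⟩
      · exact Or.inr (Or.inr (Or.inl ⟨rfl, rfl, rfl⟩))
  · refine ⟨fun x y => (x = St16.qr ∧ y = St16.r) ∨ (x = St16.r ∧ y = St16.qr) ∨ (x = St16.r0 ∧ y = St16.r0), ⟨?_, ?_⟩, Or.inl ⟨rfl, rfl⟩⟩
    · intro x y h; tauto
    · rintro x y α x' (⟨rfl, rfl⟩|⟨rfl, rfl⟩|⟨rfl, rfl⟩) ht <;>
        rcases ht with ⟨h1,h2,h3⟩|⟨h1,h2,h3⟩|⟨h1,_⟩|⟨h1,h2,h3⟩ <;> simp_all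
      · exact Or.inr (Or.inl ⟨rfl, rfl, rfl⟩)
      · exact Or.inr (Or.inr (Or.inr ⟨rfl, rfl, rfl⟩))
  · rintro ⟨B, ⟨hsym, hstep⟩, hB⟩
    have := hstep St16.qr St16.pr Ac16.a St16.r0 (hsym hB)
      (Or.inr (Or.inr (Or.inr ⟨rfl, rfl, rfl⟩)))
    rcases this with ⟨h, _⟩ | ⟨q', q'', he, ht, _⟩
    · exact Ac16.noConfusion h
    · have := eps_pr q' he; subst this
      rcases ht with ⟨h,_⟩|⟨h,_⟩|⟨_,h,_⟩|⟨h,_⟩ <;> simp_all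
  · rintro ⟨B, ⟨hsym, _⟩, hsr, hB⟩
    have hq : Stable Tr16 Ac16.tau St16.q := by
      rintro x (⟨h,_⟩|⟨h,_⟩|⟨h,_⟩|⟨h,_⟩) <;> simp_all
    obtain ⟨q', he, hst, _⟩ := hsr St16.q St16.p (hsym hB) hq
    have hq' : q' = St16.p := eps_p q' he
    subst hq'
    exact hst St16.p (Or.inl ⟨rfl, rfl, rfl⟩)
end
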